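/- Let σ be a type and let f₁, …, f_r ∈ MvPolynomial σ ℚ[t] be polynomials that are linearly independent over the field ℚ(t) (after viewing their coefficients in ℚ(t) via the coefficientwise embedding ℚ[t] ↪ ℚ(t)). Then there exist nonzero g₁, …, g_r ∈ MvPolynomial σ ℚ[t], each lying in the ℚ(t)-linear span of f₁, …, f_r and spanning the same ℚ(t)-subspace, such that the initial forms in(g₁), …, in(g_r) are linearly independent over ℚ in MvPolynomial σ ℚ. In particular, the ℚ-dimension of the ℚ-span of {in(g) : g a nonzero ℚ[t]-coefficient element of the ℚ(t)-span of f₁,…,f_r} is at least r. -/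

import Mathlib

/-!
Since the `fᵢ` are `ℚ(t)`-independent, there are monomials `m₁, …, m_r` at which their
coefficient matrix `D` is nonsingular.
If `∑ cᵢ in(gᵢ) = 0` is a relation and `j` maximises `ω₀(g_j)` among the `i` with `cᵢ ≠ 0`,
replacing `g_j` by `∑ cᵢ t^(ω₀(g_j) - ω₀(gᵢ)) gᵢ` cancels the terms of order `ω₀(g_j)`, so
`ω₀(g_j)` goes up, while `det D` is only multiplied by the constant `c_j`. Since
`t^(∑ ω₀(gᵢ))` divides `det D`, this can happen only finitely often, and at the end the
initial forms are independent.
-/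

open Polynomial

/-- The t-adic valuation of the ℚ[t]-coefficient of minimal valuation of a
multivariate polynomial over ℚ[t]. -/
noncomputable def omega0 {σ : Type*} (f : MvPolynomial σ ℚ[X]) : ℕ :=
  sInf ((fun m => (f.coeff m).rootMultiplicity 0) '' ↑f.support)

/-- The initial form of `f`: the coefficient at each monomial is the coefficient of
`t ^ ω₀(f)` in the corresponding ℚ[t]-coefficient of `f`. -/
noncomputable def initForm {σ : Type*} (f : MvPolynomial σ ℚ[X]) : MvPolynomial σ ℚ :=
  ∑ m ∈ f.support, MvPolynomial.monomial m ((f.coeff m).coeff (omega0 f))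

/-- The coefficientwise embedding `MvPolynomial σ ℚ[t] → MvPolynomial σ ℚ(t)`. -/
noncomputable def toRatFunc {σ : Type*} (f : MvPolynomial σ ℚ[X]) :
    MvPolynomial σ (RatFunc ℚ) :=
  MvPolynomial.map (algebraMap ℚ[X] (RatFunc ℚ)) f

namespace Matrix

theorem prod_dvd_det_of_forall_dvd {R n : Type*} [CommRing R] [Fintype n] [DecidableEq n]
    {A : Matrix n n R} (d : n → R) (h : ∀ i k, d i ∣ A i k) : ∏ i, d i ∣ A.det := by
  choose B hB using h
  have hA : A = diagonal d * of B := by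
    ext i k
    simp [diagonal_mul, hB]
  rw [hA, det_mul, det_diagonal]
  exact dvd_mul_right _ _

variable {K ι κ : Type*} [Field K] [Fintype ι]

theorem span_range_col_eq_top_of_linearIndependent_row {A : Matrix ι κ K}
    (hA : LinearIndependent K A.row) : Submodule.span K (Set.range A.col) = ⊤ := by
  classical
  by_contra hne
  obtain ⟨f, hf, hfA⟩ := Submodule.exists_dual_map_eq_bot_of_lt_top (lt_top_iff_ne_top.mpr hne)
    inferInstance
  apply hf
  have hrel : ∑ i, f (fun j => if i = j then 1 else 0) • A.row i = 0 := by
    ext k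
    have hk : f (A.col k) = 0 :=
      (LinearMap.le_ker_iff_map.mpr hfA) (Submodule.subset_span ⟨k, rfl⟩)
    rw [LinearMap.pi_apply_eq_sum_univ f] at hk
    simpa [mul_comm] using hk
  have hc := Fintype.linearIndependent_iff.mp hA _ hrel
  refine (Pi.basisFun K ι).ext fun i => ?_
  rw [Pi.basisFun_apply, LinearMap.zero_apply, ← hc i]
  congr 1
  ext j
  simp [Pi.single_apply, eq_comm]

theorem exists_det_submatrix_ne_zero_of_linearIndependent_row [DecidableEq ι] {A : Matrix ι κ K}
    (hA : LinearIndependent K A.row) : ∃ m : ι → κ, (A.submatrix id m).det ≠ 0 := by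
  obtain ⟨κ', a, -, hspan, hli⟩ := exists_linearIndependent' K A.col
  let b : Module.Basis κ' K (ι → K) :=
    .mk hli (by rw [hspan, span_range_col_eq_top_of_linearIndependent_row hA])
  let e : ι ≃ κ' := (Pi.basisFun K ι).indexEquiv b
  refine ⟨a ∘ e, ?_⟩
  have hcols : LinearIndependent K (A.submatrix id (a ∘ e)).col := hli.comp e e.injective
  exact ((isUnit_iff_isUnit_det _).mp (linearIndependent_cols_iff_isUnit.mp hcols)).ne_zero

end Matrix

namespace MvPolynomial

variable {R S σ ι κ : Type*}

def coeffMatrix [CommSemiring R] (g : ι → MvPolynomial σ R) (m : κ → σ →₀ ℕ) : Matrix ι κ R :=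
  Matrix.of fun i k => (g i).coeff (m k)

theorem coeffMatrix_map [CommSemiring R] [CommSemiring S] (φ : R →+* S) (g : ι → MvPolynomial σ R)
    (m : κ → σ →₀ ℕ) : coeffMatrix (fun i => map φ (g i)) m = (coeffMatrix g m).map φ := by
  ext i k
  simp [coeffMatrix, coeff_map]

theorem coeffMatrix_update [CommSemiring R] [DecidableEq ι] (g : ι → MvPolynomial σ R)
    (m : κ → σ →₀ ℕ) (j : ι) (p : MvPolynomial σ R) :
    coeffMatrix (Function.update g j p) m =
      (coeffMatrix g m).updateRow j fun k => p.coeff (m k) := by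
  ext i k
  rcases eq_or_ne i j with rfl | hij <;> simp [coeffMatrix, *]

theorem det_coeffMatrix_update_sum [CommRing R] [Fintype ι] [DecidableEq ι]
    (g : ι → MvPolynomial σ R) (m : ι → σ →₀ ℕ) (j : ι) (a : ι → R) :
    (coeffMatrix (Function.update g j (∑ i, a i • g i)) m).det = a j * (coeffMatrix g m).det := by
  rw [coeffMatrix_update, ← smul_eq_mul, ← Matrix.det_updateRow_sum]
  congr 2
  ext k
  simp [coeffMatrix, coeff_sum, Finset.sum_apply]

theorem linearIndependent_of_det_coeffMatrix_ne_zero [CommRing R] [IsDomain R] [Fintype ι]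
    [DecidableEq ι] {g : ι → MvPolynomial σ R} {m : ι → σ →₀ ℕ}
    (h : (coeffMatrix g m).det ≠ 0) : LinearIndependent R g :=
  LinearIndependent.of_comp (LinearMap.pi fun k => lcoeff R (m k))
    (Matrix.linearIndependent_rows_of_det_ne_zero h)

theorem exists_det_coeffMatrix_ne_zero [Field R] [Fintype ι] [DecidableEq ι]
    {g : ι → MvPolynomial σ R} (hg : LinearIndependent R g) :
    ∃ m : ι → σ →₀ ℕ, (coeffMatrix g m).det ≠ 0 :=
  Matrix.exists_det_submatrix_ne_zero_of_linearIndependent_row (A := coeffMatrix g id)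
    (hg.map' (LinearMap.pi fun mm => lcoeff R mm)
      (LinearMap.ker_eq_bot'.mpr fun p hp => ext p 0 fun mm => congrFun hp mm))

end MvPolynomial

theorem det_coeffMatrix_toRatFunc {σ ι : Type*} [Fintype ι] [DecidableEq ι]
    (g : ι → MvPolynomial σ ℚ[X]) (m : ι → σ →₀ ℕ) :
    (MvPolynomial.coeffMatrix (fun i => toRatFunc (g i)) m).det =
      algebraMap ℚ[X] (RatFunc ℚ) (MvPolynomial.coeffMatrix g m).det := by
  simp only [toRatFunc, MvPolynomial.coeffMatrix_map, RingHom.map_det]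
  rfl

section InitialForm

variable {σ ι : Type*}

theorem X_pow_omega0_dvd_coeff (f : MvPolynomial σ ℚ[X]) (m : σ →₀ ℕ) :
    X ^ omega0 f ∣ f.coeff m := by
  by_cases hm : f.coeff m = 0
  · simp [hm]
  · have hle : omega0 f ≤ (f.coeff m).rootMultiplicity 0 :=
      Nat.sInf_le (Set.mem_image_of_mem _ (MvPolynomial.mem_support_iff.mpr hm))
    have hdvd := pow_rootMultiplicity_dvd (f.coeff m) 0
    rw [C_0, sub_zero] at hdvd
    exact (pow_dvd_pow X hle).trans hdvd

theorem le_omega0 {f : MvPolynomial σ ℚ[X]} (hf : f ≠ 0) {n : ℕ}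
    (h : ∀ m, X ^ n ∣ f.coeff m) : n ≤ omega0 f := by
  refine le_csInf ((Finset.coe_nonempty.mpr (MvPolynomial.support_nonempty.mpr hf)).image _) ?_
  rintro _ ⟨m, hm, rfl⟩
  simpa [le_rootMultiplicity_iff (MvPolynomial.mem_support_iff.mp hm)] using h m

theorem coeff_initForm (f : MvPolynomial σ ℚ[X]) (m : σ →₀ ℕ) :
    (initForm f).coeff m = (f.coeff m).coeff (omega0 f) := by
  classical
  rw [initForm, MvPolynomial.coeff_sum]
  simp only [MvPolynomial.coeff_monomial, Finset.sum_ite_eq', MvPolynomial.mem_support_iff]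
  split_ifs with h
  · rfl
  · simp [not_not.mp h]

theorem sum_omega0_le_rootMultiplicity_det [Fintype ι] [DecidableEq ι]
    (g : ι → MvPolynomial σ ℚ[X]) (m : ι → σ →₀ ℕ) (h : (MvPolynomial.coeffMatrix g m).det ≠ 0) :
    ∑ i, omega0 (g i) ≤ (MvPolynomial.coeffMatrix g m).det.rootMultiplicity 0 := by
  rw [le_rootMultiplicity_iff h, C_0, sub_zero, ← Finset.prod_pow_eq_pow_sum]
  exact Matrix.prod_dvd_det_of_forall_dvd _ fun i k => X_pow_omega0_dvd_coeff (g i) (m k)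

theorem coeff_C_mul_X_pow_sub_omega0_mul {g : MvPolynomial σ ℚ[X]} {c : ℚ} {ω d : ℕ}
    (hω : c ≠ 0 → omega0 g ≤ ω) (hd : d ≤ ω) (m : σ →₀ ℕ) :
    (C c * X ^ (ω - omega0 g) * g.coeff m).coeff d =
      if d = ω then c * (initForm g).coeff m else 0 := by
  rcases eq_or_ne c 0 with rfl | hc
  · simp
  rw [mul_assoc, coeff_C_mul, coeff_X_pow_mul', coeff_initForm]
  split_ifs with hle hdω hdω
  · subst hdω
    rw [Nat.sub_sub_self (hω hc)]
  · have hlt : d - (ω - omega0 g) < omega0 g := by omega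
    rw [(X_pow_dvd_iff.mp (X_pow_omega0_dvd_coeff g m)) _ hlt, mul_zero]
  · omega
  · rw [mul_zero]

theorem X_pow_succ_dvd_coeff_sum [Fintype ι] {g : ι → MvPolynomial σ ℚ[X]} {c : ι → ℚ} {ω : ℕ}
    (hc : ∑ i, c i • initForm (g i) = 0) (hω : ∀ i, c i ≠ 0 → omega0 (g i) ≤ ω) (m : σ →₀ ℕ) :
    X ^ (ω + 1) ∣ (∑ i, (C (c i) * X ^ (ω - omega0 (g i))) • g i).coeff m := by
  rw [X_pow_dvd_iff]
  intro d hd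
  simp only [MvPolynomial.coeff_sum, MvPolynomial.coeff_smul, smul_eq_mul, finsetSum_coeff,
    coeff_C_mul_X_pow_sub_omega0_mul (hω _) (Nat.lt_succ_iff.mp hd)]
  split_ifs
  · simpa [MvPolynomial.coeff_sum] using congrArg (MvPolynomial.coeff m) hc
  · simp

end InitialForm

section Iteration

open MvPolynomial (coeffMatrix)

variable {σ ι : Type*} [Fintype ι] [DecidableEq ι] (L : Submodule ℚ[X] (MvPolynomial σ ℚ[X]))
  (m : ι → σ →₀ ℕ)

theorem exists_sum_omega0_lt_of_not_linearIndependent {g : ι → MvPolynomial σ ℚ[X]}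
    (hgL : ∀ i, g i ∈ L) (hdet : (coeffMatrix g m).det ≠ 0)
    (hdep : ¬LinearIndependent ℚ fun i => initForm (g i)) :
    ∃ g' : ι → MvPolynomial σ ℚ[X], (∀ i, g' i ∈ L) ∧
      (∃ c : ℚ, c ≠ 0 ∧ (coeffMatrix g' m).det = C c * (coeffMatrix g m).det) ∧
      ∑ i, omega0 (g i) < ∑ i, omega0 (g' i) := by
  obtain ⟨c, hc, j₀, hj₀⟩ := Fintype.not_linearIndependent_iff.mp hdep
  obtain ⟨j, hj, hjmax⟩ := Finset.exists_max_image {i | c i ≠ 0} (fun i => omega0 (g i))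
    ⟨j₀, by simpa using hj₀⟩
  have hcj : c j ≠ 0 := by simpa using hj
  set ω := omega0 (g j)
  set a : ι → ℚ[X] := fun i => C (c i) * X ^ (ω - omega0 (g i))
  set h := ∑ i, a i • g i
  have hdet' : (coeffMatrix (Function.update g j h) m).det = C (c j) * (coeffMatrix g m).det := by
    simp [h, MvPolynomial.det_coeffMatrix_update_sum, a, ω]
  have hh : h ≠ 0 := by
    intro h0
    refine mul_ne_zero (C_ne_zero.mpr hcj) hdet (hdet' ▸ Matrix.det_eq_zero_of_row_eq_zero j ?_)
    simp [MvPolynomial.coeffMatrix, h0]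
  have hlt : ω < omega0 h :=
    le_omega0 hh (X_pow_succ_dvd_coeff_sum hc fun i hi => hjmax i (by simpa using hi))
  refine ⟨Function.update g j h, fun i => ?_, ⟨c j, hcj, hdet'⟩, ?_⟩
  · rcases eq_or_ne i j with rfl | hij
    · simpa using L.sum_mem fun i _ => L.smul_mem (a i) (hgL i)
    · simpa [hij] using hgL i
  · refine Finset.sum_lt_sum (fun i _ => ?_) ⟨j, Finset.mem_univ j, by simpa using hlt⟩
    rcases eq_or_ne i j with rfl | hij
    · simpa using hlt.le
    · simp [hij]

theorem exists_initForm_linearIndependent_of_det_ne_zero {g : ι → MvPolynomial σ ℚ[X]}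
    (hgL : ∀ i, g i ∈ L) (hdet : (coeffMatrix g m).det ≠ 0) :
    ∃ g' : ι → MvPolynomial σ ℚ[X], (∀ i, g' i ∈ L) ∧ (coeffMatrix g' m).det ≠ 0 ∧
      LinearIndependent ℚ fun i => initForm (g' i) := by
  induction hn : (coeffMatrix g m).det.rootMultiplicity 0 - ∑ i, omega0 (g i)
    using Nat.strong_induction_on generalizing g with
  | _ n ih =>
    by_cases hind : LinearIndependent ℚ fun i => initForm (g i)
    · exact ⟨g, hgL, hdet, hind⟩
    obtain ⟨g', hg'L, ⟨c, hc, hdet'⟩, hlt⟩ :=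
      exists_sum_omega0_lt_of_not_linearIndependent L m hgL hdet hind
    have hdet'0 : (coeffMatrix g' m).det ≠ 0 := hdet' ▸ mul_ne_zero (C_ne_zero.mpr hc) hdet
    have hmult : (coeffMatrix g' m).det.rootMultiplicity 0 =
        (coeffMatrix g m).det.rootMultiplicity 0 := by
      rw [hdet', rootMultiplicity_mul (hdet' ▸ hdet'0), rootMultiplicity_C, zero_add]
    have hbound := sum_omega0_le_rootMultiplicity_det g' m hdet'0
    exact ih _ (by omega) hg'L hdet'0 rfl

end Iteration

theorem exists_initForm_linearIndependent {σ : Type*} (r : ℕ)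
    (f : Fin r → MvPolynomial σ ℚ[X])
    (hf : LinearIndependent (RatFunc ℚ) (fun i => toRatFunc (f i))) :
    (∃ g : Fin r → MvPolynomial σ ℚ[X],
      (∀ i, g i ≠ 0) ∧
      (∀ i, toRatFunc (g i) ∈
        Submodule.span (RatFunc ℚ) (Set.range fun i => toRatFunc (f i))) ∧
      Submodule.span (RatFunc ℚ) (Set.range fun i => toRatFunc (g i)) =
        Submodule.span (RatFunc ℚ) (Set.range fun i => toRatFunc (f i)) ∧
      LinearIndependent ℚ (fun i => initForm (g i))) ∧
    (r : Cardinal) ≤ Module.rank ℚ (Submodule.span ℚ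
      {h : MvPolynomial σ ℚ | ∃ g₀ : MvPolynomial σ ℚ[X], g₀ ≠ 0 ∧
        toRatFunc g₀ ∈
          Submodule.span (RatFunc ℚ) (Set.range fun i => toRatFunc (f i)) ∧
        h = initForm g₀}) := by
  set V := Submodule.span (RatFunc ℚ) (Set.range fun i => toRatFunc (f i))
  let L : Submodule ℚ[X] (MvPolynomial σ ℚ[X]) :=
    (V.restrictScalars ℚ[X]).comap
      (MvPolynomial.mapAlgHom (Algebra.ofId ℚ[X] (RatFunc ℚ))).toLinearMap
  obtain ⟨m, hm⟩ := MvPolynomial.exists_det_coeffMatrix_ne_zero hf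
  obtain ⟨g, hgL, hdet, hind⟩ := exists_initForm_linearIndependent_of_det_ne_zero L m
    (g := f) (fun i => Submodule.subset_span ⟨i, rfl⟩) (by simpa [det_coeffMatrix_toRatFunc] using hm)
  have hgli : LinearIndependent (RatFunc ℚ) fun i => toRatFunc (g i) :=
    MvPolynomial.linearIndependent_of_det_coeffMatrix_ne_zero (m := m) <| by
      rwa [det_coeffMatrix_toRatFunc, map_ne_zero_iff _ (IsFractionRing.injective ℚ[X] (RatFunc ℚ))]
  have : FiniteDimensional (RatFunc ℚ) V := .span_of_finite _ (Set.finite_range _)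
  have hspan : Submodule.span (RatFunc ℚ) (Set.range fun i => toRatFunc (g i)) = V :=
    Submodule.eq_of_le_of_finrank_eq (Submodule.span_le.mpr (Set.range_subset_iff.mpr hgL))
      (by rw [finrank_span_eq_card hgli, finrank_span_eq_card hf])
  have hg0 (i : Fin r) : g i ≠ 0 := fun h0 => hgli.ne_zero i (by simp [h0, toRatFunc])
  refine ⟨⟨g, hg0, hgL, hspan, hind⟩, ?_⟩
  calc (r : Cardinal) = Module.rank ℚ (Submodule.span ℚ (Set.range fun i => initForm (g i))) := by
        rw [rank_span hind]
        simpa using (Cardinal.mk_range_eq_of_injective hind.injective).symm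
    _ ≤ _ := Submodule.rank_mono (Submodule.span_mono (Set.range_subset_iff.mpr
        fun i => by exact ⟨g i, hg0 i, hgL i, rfl⟩))
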